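/- arXiv:1311.6176 — 5 statements merged into one kernel-verified Lean document; each statement's English description precedes it below -/
import Mathlib

section
/- Let A be a finite set of integers and let E(A,A) denote the number of quadruples (a1,a2,a3,a4) in A^4 with a1+a2=a3+a4. Suppose E(A,A) ≥ |A|^3/K for some real K > 0. Then there exists a set H of integers with |H| ≥ |A|/(2K) such that for every h in H, the intersection A ∩ (A+h) has at least |A|/(2K) elements. -/
/-!
Write r(d) = |A ∩ (A + d)| for the number of representations d = a - b with a, b ∈ A. Then
E(A,A) = ∑ r(d)², ∑ r(d) = |A|² and r(d) ≤ |A|. Splitting the energy at the threshold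
c = |A|/(2K), the differences with r(d) < c contribute at most c ∑ r(d) = |A|³/(2K), half of
the assumed energy, so the popular differences (r(d) ≥ c) contribute at least |A|³/(2K); as each
contributes at most |A|², there are at least |A|/(2K) of them.
-/

open Finset
open scoped Combinatorics.Additive Pointwise

namespace Finset

lemma sum_sq_le_card_filter_mul_sq_add_mul_sum {ι : Type*} (D : Finset ι) (f : ι → ℝ) {M c : ℝ}
    (hc : 0 ≤ c) (hf₀ : ∀ i ∈ D, 0 ≤ f i) (hfM : ∀ i ∈ D, f i ≤ M) :
    ∑ i ∈ D, f i ^ 2 ≤ #{i ∈ D | c ≤ f i} * M ^ 2 + c * ∑ i ∈ D, f i := by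
  rw [← sum_filter_add_sum_filter_not D (fun i => c ≤ f i)]
  have hlarge : ∑ i ∈ D with c ≤ f i, f i ^ 2 ≤ #{i ∈ D | c ≤ f i} * M ^ 2 := by
    rw [← nsmul_eq_mul]
    refine sum_le_card_nsmul _ _ _ fun i hi => ?_
    have hi := (mem_filter.1 hi).1
    exact pow_le_pow_left₀ (hf₀ i hi) (hfM i hi) 2
  have hsmall : ∑ i ∈ D with ¬c ≤ f i, f i ^ 2 ≤ c * ∑ i ∈ D, f i :=
    calc ∑ i ∈ D with ¬c ≤ f i, f i ^ 2
        ≤ ∑ i ∈ D with ¬c ≤ f i, c * f i := sum_le_sum fun i hi => by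
          obtain ⟨hi, hlt⟩ := mem_filter.1 hi
          rw [sq]
          exact mul_le_mul_of_nonneg_right (not_le.1 hlt).le (hf₀ i hi)
      _ = c * ∑ i ∈ D with ¬c ≤ f i, f i := (mul_sum _ _ _).symm
      _ ≤ c * ∑ i ∈ D, f i := mul_le_mul_of_nonneg_left
          (sum_le_sum_of_subset_of_nonneg (filter_subset _ _) fun i hi _ => hf₀ i hi) hc
  exact add_le_add hlarge hsmall

variable {α : Type*} [AddCommGroup α] [DecidableEq α]

lemma card_filter_sub_eq_card_inter_image_add (s t : Finset α) (d : α) :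
    #{xy ∈ s ×ˢ t | xy.1 - xy.2 = d} = #(s ∩ t.image (· + d)) := by
  refine card_nbij' Prod.fst (fun x => (x, x - d)) ?_ ?_ ?_ ?_
  · rintro ⟨x, y⟩ hxy
    simp only [coe_filter, mem_product, Set.mem_ofPred_eq] at hxy
    obtain ⟨⟨hx, hy⟩, rfl⟩ := hxy
    simp only [mem_coe, mem_inter, mem_image]
    exact ⟨hx, y, hy, by abel⟩
  · intro x hx
    simp only [coe_inter, coe_image, Set.mem_inter_iff, mem_coe, Set.mem_image] at hx
    obtain ⟨hx, y, hy, rfl⟩ := hx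
    simpa using ⟨hx, hy⟩
  · rintro ⟨x, y⟩ hxy
    simp only [coe_filter, Set.mem_ofPred_eq] at hxy
    simp [← hxy.2]
  · intro x _
    rfl

lemma addEnergy_eq_sum_sq_card_filter_sub (s t : Finset α) :
    E[s, t] = ∑ d ∈ s - t, #{xy ∈ s ×ˢ t | xy.1 - xy.2 = d} ^ 2 := by
  have hswap : E[s, t] = #{x ∈ (s ×ˢ t) ×ˢ (s ×ˢ t) | x.1.1 - x.1.2 = x.2.1 - x.2.2} := by
    refine card_nbij' (fun x => ((x.1.1, x.2.2), (x.1.2, x.2.1)))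
      (fun x => ((x.1.1, x.2.1), (x.2.2, x.1.2))) ?_ ?_ (fun _ _ => rfl) (fun _ _ => rfl)
    · rintro ⟨⟨a₁, a₂⟩, b₁, b₂⟩ h
      simp_all [sub_eq_sub_iff_add_eq_add]
    · rintro ⟨⟨a₁, b₂⟩, a₂, b₁⟩ h
      simp_all [sub_eq_sub_iff_add_eq_add]
  rw [hswap, card_eq_sum_card_fiberwise (f := fun x => x.1.1 - x.1.2) (t := s - t)]
  · refine sum_congr rfl fun d _ => ?_
    rw [sq, ← card_product, filter_filter]
    congr 1
    ext ⟨⟨a₁, b₁⟩, a₂, b₂⟩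
    simp only [mem_filter, mem_product]
    constructor
    · rintro ⟨h, h', rfl⟩
      exact ⟨⟨h.1, rfl⟩, h.2, h'.symm⟩
    · rintro ⟨⟨h, rfl⟩, h', e⟩
      exact ⟨⟨h, h'⟩, e.symm, rfl⟩
  · rintro ⟨⟨a₁, b₁⟩, _⟩ h
    simp only [coe_filter, mem_product, Set.mem_ofPred_eq] at h
    exact sub_mem_sub h.1.1.1 h.1.1.2

lemma sum_card_filter_sub (s t : Finset α) :
    ∑ d ∈ s - t, #{xy ∈ s ×ˢ t | xy.1 - xy.2 = d} = #s * #t := by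
  rw [← card_product, ← card_eq_sum_card_fiberwise]
  rintro ⟨a, b⟩ h
  exact sub_mem_sub (mem_product.1 h).1 (mem_product.1 h).2

lemma addEnergy_le_card_filter_mul_sq_add (s t : Finset α) {c : ℝ} (hc : 0 ≤ c) :
    (E[s, t] : ℝ) ≤ #{d ∈ s - t | c ≤ #(s ∩ t.image (· + d))} * #s ^ 2 + c * (#s * #t) := by
  simp_rw [← card_filter_sub_eq_card_inter_image_add]
  rw [addEnergy_eq_sum_sq_card_filter_sub, ← Nat.cast_mul, ← sum_card_filter_sub]
  push_cast
  refine sum_sq_le_card_filter_mul_sq_add_mul_sum _ _ hc (fun _ _ => Nat.cast_nonneg _)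
    fun d _ => ?_
  rw [card_filter_sub_eq_card_inter_image_add]
  exact_mod_cast card_le_card inter_subset_left

end Finset

theorem stmt0 (A : Finset ℤ) (K : ℝ) (hK : 0 < K)
    (hE : ((A.card : ℝ))^3 / K ≤
      ((((A ×ˢ A) ×ˢ (A ×ˢ A)).filter
        (fun x => x.1.1 + x.1.2 = x.2.1 + x.2.2)).card : ℝ)) :
    ∃ H : Finset ℤ, (A.card : ℝ) / (2*K) ≤ (H.card : ℝ) ∧
      ∀ h ∈ H, (A.card : ℝ) / (2*K) ≤ ((A ∩ A.image (· + h)).card : ℝ) := by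
  set c := (#A : ℝ) / (2 * K)
  set H := {d ∈ A - A | c ≤ #(A ∩ A.image (· + d))}
  refine ⟨H, ?_, fun d hd => (mem_filter.1 hd).2⟩
  rcases A.eq_empty_or_nonempty with rfl | hA
  · simp [c]
  rw [← addEnergy_eq_card_filter] at hE
  have hsplit := addEnergy_le_card_filter_mul_sq_add A A (by positivity : 0 ≤ c)
  have hcube : (#A : ℝ) ^ 3 / K = 2 * (c * #A ^ 2) := by
    simp only [c]
    field_simp
  have hpopular : c * #A ^ 2 ≤ #H * #A ^ 2 := by linarith
  exact le_of_mul_le_mul_right hpopular (by positivity)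
end

section
/- For all positive real numbers a, b with a + b ≤ 1, one has 1/a + 1/b ≥ 4 + 2(1-2a)^2 + 2(1-2b)^2. -/
/-!
The function `g x = 1/x - 2(1 - 2x)²` is decreasing on `(0, ∞)`, and the claim reads
`4 ≤ g a + g b`. Since `b ≤ 1 - a`, it suffices to treat `b = 1 - a`; there, with
`p = a(1 - a) ≤ 1/4`, it becomes `1/p - 4(1 - 4p) ≥ 4`, i.e. `(1 - 4p)² ≥ 0`.
-/

-- AM-GM: `x y (1 - x - y) ≤ 1/27` when the last factor is nonnegative.
lemma eight_mul_mul_one_sub_add_le_one {x y : ℝ} (hx : 0 < x) (hy : 0 < y) :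
    8 * x * y * (1 - x - y) ≤ 1 := by
  rcases le_or_gt (x + y) 1 with hxy | hxy
  · nlinarith [mul_pos hx hy, sq_nonneg (x - y), sq_nonneg (x + y - 2 / 3),
      mul_nonneg (mul_nonneg hx.le hy.le) (sub_nonneg.2 hxy)]
  · nlinarith [mul_pos hx hy]

lemma antitoneOn_inv_sub_two_mul_one_sub_two_mul_sq :
    AntitoneOn (fun x : ℝ => x⁻¹ - 2 * (1 - 2 * x) ^ 2) (Set.Ioi 0) := by
  intro x (hx : 0 < x) y (hy : 0 < y) hxy
  have key : (y⁻¹ - 2 * (1 - 2 * y) ^ 2) - (x⁻¹ - 2 * (1 - 2 * x) ^ 2)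
      = (y - x) * (8 * x * y * (1 - x - y) - 1) / (x * y) := by
    field_simp
    ring
  have hle : (y - x) * (8 * x * y * (1 - x - y) - 1) / (x * y) ≤ 0 :=
    div_nonpos_of_nonpos_of_nonneg
      (mul_nonpos_of_nonneg_of_nonpos (sub_nonneg.2 hxy)
        (sub_nonpos.2 (eight_mul_mul_one_sub_add_le_one hx hy)))
      (mul_pos hx hy).le
  dsimp only
  linarith

lemma four_add_four_mul_one_sub_two_mul_sq_le_inv_add_inv_one_sub {a : ℝ} (ha : 0 < a)
    (ha' : a < 1) : 4 + 4 * (1 - 2 * a) ^ 2 ≤ a⁻¹ + (1 - a)⁻¹ := by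
  have h1a : 1 - a ≠ 0 := (sub_pos.2 ha').ne'
  have hsum : a⁻¹ + (1 - a)⁻¹ = 1 / (a * (1 - a)) := by
    field_simp
    ring
  have hsq : (1 - 2 * a) ^ 2 = 1 - 4 * (a * (1 - a)) := by ring
  rw [hsum, hsq, le_div_iff₀ (mul_pos ha (sub_pos.2 ha'))]
  nlinarith [sq_nonneg (1 - 4 * (a * (1 - a)))]

theorem stmt1 (a b : ℝ) (ha : 0 < a) (hb : 0 < b) (hab : a + b ≤ 1) :
    4 + 2*(1 - 2*a)^2 + 2*(1 - 2*b)^2 ≤ 1/a + 1/b := by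
  have hmono := antitoneOn_inv_sub_two_mul_one_sub_two_mul_sq hb (show 0 < 1 - a by linarith)
    (show b ≤ 1 - a by linarith)
  have hpair := four_add_four_mul_one_sub_two_mul_sq_le_inv_add_inv_one_sub ha (by linarith)
  have hreflect : (1 - 2 * (1 - a)) ^ 2 = (1 - 2 * a) ^ 2 := by ring
  simp only [hreflect] at hmono
  rw [one_div, one_div]
  linarith
end

section
/- Let p be a prime and let S be a nonempty proper subset of ℤ/pℤ with |S| < 1/ε for a real number ε ∈ (0,1). If h ∈ ℤ/pℤ satisfies |S ∩ (S+h)| ≥ (1-ε)|S|, then h = 0. -/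
open Finset

/-! If `ε |S| < 1`, the hypothesis forces `S ∩ (S + h) = S`, so `S` is invariant under translation
by `h`. For `h ≠ 0` the multiples of `h` exhaust `ℤ/pℤ`, so a nonempty invariant set is everything. -/

theorem Finset.image_eq_self_of_card_le_card_inter {α : Type*} [DecidableEq α] {f : α → α}
    (hf : Function.Injective f) {S : Finset α} (hS : S.card ≤ (S ∩ S.image f).card) :
    S.image f = S := by
  have hsub : S ⊆ S.image f := inter_eq_left.mp (eq_of_subset_of_card_le inter_subset_left hS)
  exact (eq_of_subset_of_card_le hsub (card_image_of_injective S hf).le).symm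

theorem Finset.add_nsmul_mem_of_image_add_eq_self {G : Type*} [AddMonoid G] [DecidableEq G]
    {S : Finset G} {h : G} (hS : S.image (· + h) = S) {s : G} (hs : s ∈ S) (n : ℕ) :
    s + n • h ∈ S := by
  induction n with
  | zero => simpa using hs
  | succ k ih =>
    rw [succ_nsmul, ← add_assoc, ← hS]
    exact mem_image_of_mem _ ih

theorem ZMod.eq_univ_of_image_add_eq_self {p : ℕ} [Fact p.Prime] {S : Finset (ZMod p)}
    (hS : S.Nonempty) {h : ZMod p} (hh : h ≠ 0) (hinv : S.image (· + h) = S) : S = univ := by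
  obtain ⟨s, hs⟩ := hS
  refine eq_univ_of_forall fun x => ?_
  have hx : s + ((x - s) * h⁻¹).val • h = x := by
    rw [nsmul_eq_mul, ZMod.natCast_val, ZMod.cast_id', id, mul_assoc, inv_mul_cancel₀ hh]
    ring
  exact hx ▸ add_nsmul_mem_of_image_add_eq_self hinv hs _

theorem stmt7_general (p : ℕ) [NeZero p] (hp : p.Prime) (S : Finset (ZMod p)) (hS : S.Nonempty)
    (hSproper : S ≠ Finset.univ) (ε : ℝ) (hε0 : 0 < ε)
    (hSsmall : (S.card : ℝ) < 1/ε) (h : ZMod p)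
    (hh : (1 - ε) * (S.card : ℝ) ≤ ((S ∩ S.image (· + h)).card : ℝ)) :
    h = 0 := by
  by_contra hne
  have := Fact.mk hp
  have hεS : ε * S.card < 1 := by rwa [lt_div_iff₀ hε0, mul_comm] at hSsmall
  have hcard : S.card ≤ (S ∩ S.image (· + h)).card := by
    have : (S.card : ℝ) < (S ∩ S.image (· + h)).card + 1 := by linarith
    exact Nat.lt_add_one_iff.mp (by exact_mod_cast this)
  exact hSproper <| ZMod.eq_univ_of_image_add_eq_self hS hne <|
    image_eq_self_of_card_le_card_inter (add_left_injective h) hcard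

theorem stmt7 (p : ℕ) [NeZero p] (hp : p.Prime) (S : Finset (ZMod p)) (hS : S.Nonempty)
    (hSproper : S ≠ Finset.univ) (ε : ℝ) (hε0 : 0 < ε) (hε1 : ε < 1)
    (hSsmall : (S.card : ℝ) < 1/ε) (h : ZMod p)
    (hh : (1 - ε) * (S.card : ℝ) ≤ ((S ∩ S.image (· + h)).card : ℝ)) :
    h = 0 :=
  stmt7_general p hp S hS hSproper ε hε0 hSsmall h hh
end

section
/- Let S be a nonempty subset of ℤ/pℤ (p prime), let ε > 0 be small with |S| < (1-2ε)p and |S| ≥ 1/ε. Assuming Pollard's inequality, namely N_1 + ⋯ + N_r ≥ r(2|S|-r) for all integers r with 2|S|-p ≤ r ≤ |S| where N_i = #{h ∈ ℤ/pℤ : |S ∩ (S+h)| ≥ i}, the number of h ∈ ℤ/pℤ with |S ∩ (S+h)| ≥ (1-ε)|S| is at most 4ε|S| + 1. -/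
/-!
Write `m = |S|`, `s = ⌊εm⌋ ≥ 1` and `T` for the set of shifts being counted. An overlap of
size at least `(1 - ε)m` is at least `m - s`, so `N_i ≥ |T|` for all `i ≤ m - s`. Counting pairs,
`N_1 + ⋯ + N_m = ∑_h |S ∩ (S + h)| = m²`, and Pollard at `r = m - 2s` says the first `m - 2s`
terms already sum to at least `(m - 2s)(m + 2s) = m² - 4s²`. The `s` terms
`N_{m-2s+1}, …, N_{m-s}` therefore sum to at most `4s²`, while each is at least `|T|`; hence
`|T| ≤ 4s ≤ 4εm`.
-/

open Finset

theorem Finset.sum_card_inter_image_add_right {G : Type*} [AddGroup G] [Fintype G] [DecidableEq G]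
    (S : Finset G) : ∑ h, #(S ∩ S.image (· + h)) = #S ^ 2 := by
  have hmem : ∀ a h : G, a ∈ S.image (· + h) ↔ a - h ∈ S := by
    simp [sub_eq_add_neg]
  calc ∑ h, #(S ∩ S.image (· + h))
      = ∑ h, ∑ a ∈ S, if a - h ∈ S then 1 else 0 := by
        simp_rw [← filter_mem_eq_inter, card_filter, hmem]
    _ = ∑ a ∈ S, ∑ h, if a - h ∈ S then 1 else 0 := sum_comm
    _ = ∑ a ∈ S, #S := by
        refine sum_congr rfl fun a _ => ?_
        rw [Fintype.sum_equiv (Equiv.subLeft a) (fun h => if a - h ∈ S then 1 else 0)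
          (fun h => if h ∈ S then 1 else 0) fun _ => rfl]
        simp
    _ = #S ^ 2 := by simp [sq]

theorem Finset.sum_Icc_card_filter_le {ι : Type*} (s : Finset ι) (f : ι → ℕ) {m : ℕ}
    (hf : ∀ x ∈ s, f x ≤ m) : ∑ i ∈ Icc 1 m, #{x ∈ s | i ≤ f x} = ∑ x ∈ s, f x := by
  simp_rw [card_filter]
  rw [sum_comm]
  refine sum_congr rfl fun x hx => ?_
  have : {i ∈ Icc 1 m | i ≤ f x} = Icc 1 (f x) := by
    ext i
    simp only [mem_filter, mem_Icc]
    have := hf x hx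
    omega
  rw [← card_filter, this, Nat.card_Icc, Nat.add_sub_cancel]

theorem Nat.sub_floor_le_of_sub_le {m k : ℕ} {x : ℝ} (h : (m : ℝ) - x ≤ k) : m - ⌊x⌋₊ ≤ k := by
  rcases le_total m k with hmk | hkm
  · omega
  · have : m - k ≤ ⌊x⌋₊ := Nat.le_floor (by push_cast [hkm]; linarith)
    omega

theorem le_four_mul_of_sum_Icc_eq_sq {N : ℕ → ℕ} {m s t : ℕ} (hs : 0 < s) (hsm : 2 * s ≤ m)
    (htotal : ∑ i ∈ Icc 1 m, N i = m ^ 2)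
    (hlower : m ^ 2 ≤ ∑ i ∈ Icc 1 (m - 2 * s), N i + 4 * s ^ 2)
    (ht : ∀ i ≤ m - s, t ≤ N i) : t ≤ 4 * s := by
  have hIoc : ∀ n, Icc 1 n = Ioc 0 n := fun n => Icc_add_one_left_eq_Ioc 0 n
  have hwindow : s * t ≤ ∑ i ∈ Ioc (m - 2 * s) (m - s), N i := by
    calc s * t = ∑ _i ∈ Ioc (m - 2 * s) (m - s), t := by
          rw [sum_const, Nat.card_Ioc, smul_eq_mul]
          congr 1
          omega
      _ ≤ _ := sum_le_sum fun i hi => ht i (mem_Ioc.mp hi).2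
  have hsplit : ∑ i ∈ Icc 1 (m - 2 * s), N i + ∑ i ∈ Ioc (m - 2 * s) (m - s), N i
      ≤ ∑ i ∈ Icc 1 m, N i := by
    rw [hIoc, hIoc, sum_Ioc_consecutive _ (Nat.zero_le _) (by omega)]
    exact sum_le_sum_of_subset (Ioc_subset_Ioc_right (Nat.sub_le m s))
  have : s * t ≤ s * (4 * s) := by linarith
  exact Nat.le_of_mul_le_mul_left this hs

theorem stmt8_general (p : ℕ) [NeZero p] (S : Finset (ZMod p))
    (ε : ℝ) (hε : 0 < ε) (hSsize : (S.card : ℝ) < (1 - 2*ε) * p)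
    (hSbig : 1 ≤ ε * (S.card : ℝ))
    (N : ℕ → ℕ)
    (hN : ∀ i, N i = (Finset.univ.filter
      (fun h : ZMod p => i ≤ (S ∩ S.image (· + h)).card)).card)
    (hPollard : ∀ r : ℕ, (2 * (S.card : ℤ)) - p ≤ (r : ℤ) → r ≤ S.card →
      ((r : ℤ) * (2 * S.card - r)) ≤ ∑ i ∈ Finset.Icc 1 r, (N i : ℤ)) :
    ((Finset.univ.filter
      (fun h : ZMod p => (1 - ε) * (S.card : ℝ) ≤ ((S ∩ S.image (· + h)).card : ℝ))).card : ℝ)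
      ≤ 4 * ε * (S.card : ℝ) + 1 := by
  set m := #S
  set s := ⌊ε * m⌋₊
  have hs : 0 < s := Nat.floor_pos.mpr hSbig
  have hsε : (s : ℝ) ≤ ε * m := Nat.floor_le (by linarith)
  have hmp : (m : ℝ) ≤ p := by exact_mod_cast (card_le_univ S).trans_eq (ZMod.card p)
  have hε2 : 2 * ε < 1 := by
    have : 0 < (1 - 2 * ε) * p := (Nat.cast_nonneg m).trans_lt hSsize
    nlinarith
  have hsm : 2 * s ≤ m := by
    suffices (2 * s : ℝ) ≤ m by exact_mod_cast this
    nlinarith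
  have hmsp : m + 2 * s ≤ p := by
    suffices (m + 2 * s : ℝ) ≤ p by exact_mod_cast this
    nlinarith
  have htotal : ∑ i ∈ Icc 1 m, N i = m ^ 2 := by
    simp_rw [hN]
    rw [sum_Icc_card_filter_le _ _ fun h _ => card_le_card inter_subset_left,
      sum_card_inter_image_add_right]
  have hlower : m ^ 2 ≤ ∑ i ∈ Icc 1 (m - 2 * s), N i + 4 * s ^ 2 := by
    have := hPollard (m - 2 * s) (by push_cast [hsm]; omega) (Nat.sub_le _ _)
    zify
    push_cast [hsm] at this
    nlinarith
  have hlarge : ∀ i ≤ m - s, #{h | (1 - ε) * m ≤ (#(S ∩ S.image (· + h)) : ℝ)} ≤ N i := by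
    intro i hi
    rw [hN]
    refine card_le_card (monotone_filter_right _ fun h _ hh => hi.trans ?_)
    exact Nat.sub_floor_le_of_sub_le (by linarith)
  have hT := le_four_mul_of_sum_Icc_eq_sq hs hsm htotal hlower hlarge
  calc _ ≤ (4 * s : ℝ) := by exact_mod_cast hT
    _ ≤ 4 * ε * m + 1 := by linarith

theorem stmt8 (p : ℕ) [NeZero p] (hp : p.Prime) (S : Finset (ZMod p)) (hS : S.Nonempty)
    (ε : ℝ) (hε : 0 < ε) (hSsize : (S.card : ℝ) < (1 - 2*ε) * p)
    (hSbig : 1 ≤ ε * (S.card : ℝ))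
    (N : ℕ → ℕ)
    (hN : ∀ i, N i = (Finset.univ.filter
      (fun h : ZMod p => i ≤ (S ∩ S.image (· + h)).card)).card)
    (hPollard : ∀ r : ℕ, (2 * (S.card : ℤ)) - p ≤ (r : ℤ) → r ≤ S.card →
      ((r : ℤ) * (2 * S.card - r)) ≤ ∑ i ∈ Finset.Icc 1 r, (N i : ℤ)) :
    ((Finset.univ.filter
      (fun h : ZMod p => (1 - ε) * (S.card : ℝ) ≤ ((S ∩ S.image (· + h)).card : ℝ))).card : ℝ)
      ≤ 4 * ε * (S.card : ℝ) + 1 :=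
  stmt8_general p S ε hε hSsize hSbig N hN hPollard
end

section
/- Let ψ(x) = (ax² + bx + c)/d be a rational quadratic with integer a,b,c,d, a ≠ 0, d ≠ 0, such that ψ(ℚ) ∩ ℤ is nonempty. Define ψ̃(x) = ψ(x/a). Then ψ(ℚ) = ψ̃(ℚ) and every integer in ψ(ℚ) lies in ψ̃(ℤ). -/
/-! Substituting `x = r / a` turns `a x² + b x + c = d n` into `r² + b r + a (c - d n) = 0`, a monic
integer quadratic in `r = a x`; since `ℤ` is integrally closed, its rational roots are integers. -/

open Polynomial

theorem isIntegral_of_sq_add_mul_add_eq_zero {R A : Type*} [CommRing R] [Ring A] [Algebra R A]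
    {x : A} (b c : R) (hx : x ^ 2 + algebraMap R A b * x + algebraMap R A c = 0) :
    IsIntegral R x :=
  ⟨X ^ 2 + C b * X + C c, by monicity!, by simpa [eval₂_add, eval₂_mul] using hx⟩

theorem IsIntegrallyClosed.exists_algebraMap_eq_of_sq_add_mul_add_eq_zero {R K : Type*}
    [CommRing R] [IsDomain R] [IsIntegrallyClosed R] [Field K] [Algebra R K] [IsFractionRing R K]
    {x : K} (b c : R) (hx : x ^ 2 + algebraMap R K b * x + algebraMap R K c = 0) :
    ∃ m : R, algebraMap R K m = x :=
  IsIntegrallyClosed.isIntegral_iff.mp (isIntegral_of_sq_add_mul_add_eq_zero b c hx)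

theorem Rat.exists_int_eq_of_sq_add_mul_add_eq_zero {x : ℚ} (b c : ℤ)
    (hx : x ^ 2 + b * x + c = 0) : ∃ m : ℤ, (m : ℚ) = x :=
  IsIntegrallyClosed.exists_algebraMap_eq_of_sq_add_mul_add_eq_zero b c (by simpa using hx)

theorem stmt14_general (a b c d : ℤ) (ha : a ≠ 0) (hd : d ≠ 0)
    (ψ : ℚ → ℚ) (hψ : ∀ x : ℚ, ψ x = ((a : ℚ) * x^2 + (b : ℚ) * x + (c : ℚ)) / (d : ℚ))
    (ψt : ℚ → ℚ) (hψt : ∀ x : ℚ, ψt x = ψ (x / (a : ℚ))) :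
    Set.range ψ = Set.range ψt ∧
      ∀ n : ℤ, (n : ℚ) ∈ Set.range ψ → ∃ m : ℤ, ψt (m : ℚ) = (n : ℚ) := by
  have haQ : (a : ℚ) ≠ 0 := Int.cast_ne_zero.mpr ha
  have hψt_mul (q : ℚ) : ψt (a * q) = ψ q := by rw [hψt, mul_div_cancel_left₀ q haQ]
  refine ⟨?_, fun n ⟨q, hq⟩ => ?_⟩
  · have hsurj : Function.Surjective (fun q : ℚ => a * q) :=
      fun x => ⟨x / a, mul_div_cancel₀ x haQ⟩
    rw [← hsurj.range_comp ψt]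
    exact congrArg Set.range (funext hψt_mul).symm
  · have hroot : (a * q) ^ 2 + b * (a * q) + ((a * (c - d * n) : ℤ) : ℚ) = 0 := by
      rw [hψ, div_eq_iff (Int.cast_ne_zero.mpr hd)] at hq
      push_cast
      linear_combination (a : ℚ) * hq
    obtain ⟨m, hm⟩ := Rat.exists_int_eq_of_sq_add_mul_add_eq_zero b _ hroot
    exact ⟨m, by rw [hm, hψt_mul, hq]⟩

theorem stmt14 (a b c d : ℤ) (ha : a ≠ 0) (hd : d ≠ 0)
    (ψ : ℚ → ℚ) (hψ : ∀ x : ℚ, ψ x = ((a : ℚ) * x^2 + (b : ℚ) * x + (c : ℚ)) / (d : ℚ))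
    (ψt : ℚ → ℚ) (hψt : ∀ x : ℚ, ψt x = ψ (x / (a : ℚ)))
    (hnonempty : ∃ q : ℚ, ∃ n : ℤ, ψ q = (n : ℚ)) :
    Set.range ψ = Set.range ψt ∧
      ∀ n : ℤ, (n : ℚ) ∈ Set.range ψ → ∃ m : ℤ, ψt (m : ℚ) = (n : ℚ) :=
  stmt14_general a b c d ha hd ψ hψ ψt hψt
end
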